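/- arXiv:2311.16814 — 2 statements merged into one kernel-verified Lean document; each statement's English description precedes it below -/
import Mathlib

section
/- Let G be a group and H a subgroup of finite index. If a finite-dimensional complex representation (ρ, V) of G is semisimple as an H-representation (via restriction), then it is semisimple as a G-representation; conversely, if V is a semisimple G-representation then its restriction to H is a semisimple H-representation. -/
/-!
If `V` is semisimple over `H`, a `G`-stable subspace `p` has an `H`-equivariant projection `π`;
averaging the conjugates `ρ g ∘ π ∘ ρ g⁻¹` over `G ⧸ H` and dividing by the index gives a
`G`-equivariant projection onto `p`, whose kernel is a `G`-stable complement.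

Conversely, for a normal subgroup `N` the socle of `V` over `N` is `G`-stable, since `G` permutes
the simple `N`-submodules. A `G`-stable complement of the socle contains no simple `N`-submodule,
so it is zero (`V` is finite-dimensional) and `V` is semisimple over `N`. For `N` the normal core
of `H`, which has finite index in `H`, the averaging argument lifts this to `H`.
-/

open scoped MonoidAlgebra

theorem OrderIso.map_sSup_setOf_isAtom {α : Type*} [CompleteLattice α] (e : α ≃o α) :
    e (sSup {a | IsAtom a}) = sSup {a | IsAtom a} := by
  rw [e.map_sSup_eq_sSup_symm_preimage]
  congr 1
  ext a
  exact e.symm.isAtom_iff a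

theorem sSup_setOf_isAtom_eq_top_of_isCompl {α : Type*} [CompleteLattice α] [IsAtomic α] {c : α}
    (h : IsCompl (sSup {a | IsAtom a}) c) : sSup {a : α | IsAtom a} = ⊤ := by
  obtain rfl | ⟨a, ha, hac⟩ := eq_bot_or_exists_atom_le c
  · exact codisjoint_bot.1 h.codisjoint
  · exact (ha.1 (le_bot_iff.1 (h.disjoint (le_sSup ha) hac))).elim

namespace Representation

attribute [local instance] Subgroup.fintypeQuotientOfFiniteIndex

section CommSemiring

variable {k G V : Type*} [CommSemiring k] [Monoid G] [AddCommMonoid V] [Module k V]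
  (ρ : Representation k G V)

theorem mem_invtSubmodule_iff_forall_apply_mem {p : Submodule k V} :
    p ∈ ρ.invtSubmodule ↔ ∀ g, ∀ x ∈ p, ρ g x ∈ p := by
  simp only [mem_invtSubmodule, Module.End.mem_invtSubmodule, SetLike.le_def, Submodule.mem_comap]

theorem invtSubmodule_le_invtSubmodule_comp {G' : Type*} [Monoid G'] (f : G' →* G) :
    ρ.invtSubmodule ≤ invtSubmodule (ρ.comp f) := fun _ hp ↦
  (mem_invtSubmodule_iff_forall_apply_mem _).2 fun g ↦
    (mem_invtSubmodule_iff_forall_apply_mem ρ).1 hp (f g)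

theorem invtSubmodule.isCompl_mk_iff {p q : Submodule k V} (hp : p ∈ ρ.invtSubmodule)
    (hq : q ∈ ρ.invtSubmodule) :
    IsCompl (α := ρ.invtSubmodule) ⟨p, hp⟩ ⟨q, hq⟩ ↔ IsCompl p q := by
  rw [isCompl_iff, isCompl_iff, disjoint_iff, disjoint_iff, codisjoint_iff, codisjoint_iff,
    Sublattice.mk_inf_mk, Sublattice.mk_sup_mk, Subtype.mk_eq_bot_iff (invtSubmodule.bot_mem ρ),
    Subtype.mk_eq_top_iff (invtSubmodule.top_mem ρ)]

end CommSemiring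

section CommRing

variable {k G V : Type*} [CommRing k] [Monoid G] [AddCommGroup V] [Module k V]
  (ρ : Representation k G V)

theorem isSemisimpleModule_asModule_iff :
    IsSemisimpleModule k[G] ρ.asModule ↔
      ∀ p ∈ ρ.invtSubmodule, ∃ q ∈ ρ.invtSubmodule, IsCompl p q := by
  rw [isSemisimpleModule_iff, ← ρ.mapSubmodule.complementedLattice_iff, complementedLattice_iff,
    Subtype.forall]
  refine forall₂_congr fun p hp ↦ ?_
  simp only [Subtype.exists, invtSubmodule.isCompl_mk_iff, exists_prop]

theorem exists_isCompl_iff_exists_isProj_commute {p : Submodule k V} (hp : p ∈ ρ.invtSubmodule) :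
    (∃ q ∈ ρ.invtSubmodule, IsCompl p q) ↔
      ∃ f : Module.End k V, LinearMap.IsProj p f ∧ ∀ g, Commute f (ρ g) := by
  constructor
  · rintro ⟨q, hq, hpq⟩
    have hidem := Submodule.isIdempotentElem_projection hpq
    refine ⟨p.projection q hpq, ?_, fun g ↦ ?_⟩
    · simpa [Submodule.range_projection] using LinearMap.IsIdempotentElem.isProj_range _ hidem
    · rw [LinearMap.IsIdempotentElem.commute_iff hidem, Submodule.range_projection,
        Submodule.ker_projection]
      exact ⟨(mem_invtSubmodule ρ).1 hp g, (mem_invtSubmodule ρ).1 hq g⟩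
  · rintro ⟨f, hf, hcomm⟩
    refine ⟨LinearMap.ker f, (mem_invtSubmodule ρ).2 fun g ↦ ?_, hf.isCompl⟩
    exact ((LinearMap.IsIdempotentElem.commute_iff hf.isIdempotentElem).1 (hcomm g)).2

end CommRing

section RelNorm

variable {k G W : Type*} [CommSemiring k] [Group G] [AddCommMonoid W] [Module k W]
  (σ : Representation k G W) (H : Subgroup G)

theorem apply_eq_apply_of_mk_eq {w : W} (hw : ∀ h ∈ H, σ h w = w) {a b : G}
    (hab : (a : G ⧸ H) = b) : σ a w = σ b w := by
  obtain ⟨h, hH, rfl⟩ : ∃ h ∈ H, b = a * h :=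
    ⟨a⁻¹ * b, QuotientGroup.eq.1 hab, by group⟩
  rw [map_mul, Module.End.mul_apply, hw h hH]

variable [H.FiniteIndex]

-- On `H`-invariant vectors this does not depend on the choice of coset representatives.
noncomputable def relNorm : W →ₗ[k] W :=
  ∑ c : G ⧸ H, σ c.out

theorem relNorm_apply (w : W) : relNorm σ H w = ∑ c : G ⧸ H, σ c.out w :=
  LinearMap.sum_apply _ _ _

variable {σ H} in
theorem apply_relNorm {w : W} (hw : ∀ h ∈ H, σ h w = w) (g : G) :
    σ g (relNorm σ H w) = relNorm σ H w := by
  rw [relNorm_apply, map_sum]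
  refine Fintype.sum_equiv (MulAction.toPerm g) _ _ fun c ↦ ?_
  rw [← Module.End.mul_apply, ← map_mul]
  refine apply_eq_apply_of_mk_eq σ H hw ?_
  rw [MulAction.toPerm_apply, QuotientGroup.out_eq']
  conv_rhs => rw [← QuotientGroup.out_eq' c]
  rfl

end RelNorm

section LinHom

variable {k G V : Type*} [CommSemiring k] [Group G] [AddCommMonoid V] [Module k V]
  (ρ : Representation k G V)

theorem linHom_apply_eq_self_iff_commute (g : G) (f : Module.End k V) :
    linHom ρ ρ g f = f ↔ Commute f (ρ g) := by
  have hinv : ρ g⁻¹ = ↑(ρ.asGroupHom g)⁻¹ := by rw [← map_inv, asGroupHom_apply]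
  rw [linHom_apply, ← Module.End.mul_eq_comp, ← Module.End.mul_eq_comp, hinv, ← mul_assoc,
    ← asGroupHom_apply, Units.mul_inv_eq_iff_eq_mul]
  exact eq_comm

theorem relNorm_linHom_apply (H : Subgroup G) [H.FiniteIndex] (f : Module.End k V) (x : V) :
    relNorm (linHom ρ ρ) H f x = ∑ c : G ⧸ H, ρ c.out (f (ρ c.out⁻¹ x)) := by
  simp [relNorm_apply, LinearMap.sum_apply, linHom_apply]

end LinHom

section Averaging

variable {k G V : Type*} [Field k] [Group G] [AddCommGroup V] [Module k V]
  (ρ : Representation k G V) (H : Subgroup G) [H.FiniteIndex]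

theorem isProj_inv_index_smul_relNorm_linHom (hH : (H.index : k) ≠ 0) {p : Submodule k V}
    (hp : p ∈ ρ.invtSubmodule) {f : Module.End k V} (hf : LinearMap.IsProj p f) :
    LinearMap.IsProj p ((H.index : k)⁻¹ • relNorm (linHom ρ ρ) H f) where
  map_mem x := by
    rw [LinearMap.smul_apply, relNorm_linHom_apply]
    exact p.smul_mem _ (p.sum_mem fun c _ ↦
      (mem_invtSubmodule_iff_forall_apply_mem ρ).1 hp _ _ (hf.map_mem _))
  map_id x hx := by
    have hterm : ∀ c : G ⧸ H, ρ c.out (f (ρ c.out⁻¹ x)) = x := fun c ↦ by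
      rw [hf.map_id _ ((mem_invtSubmodule_iff_forall_apply_mem ρ).1 hp _ _ hx), self_inv_apply]
    rw [LinearMap.smul_apply, relNorm_linHom_apply, Finset.sum_congr rfl fun c _ ↦ hterm c,
      Finset.sum_const, Finset.card_univ, ← Nat.card_eq_fintype_card, ← H.index_eq_card,
      ← Nat.cast_smul_eq_nsmul k, smul_smul, inv_mul_cancel₀ hH, one_smul]

theorem isSemisimpleModule_of_isSemisimpleModule_comp_subtype (hH : (H.index : k) ≠ 0)
    (h : IsSemisimpleModule k[H] (asModule (ρ.comp H.subtype))) :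
    IsSemisimpleModule k[G] ρ.asModule := by
  rw [isSemisimpleModule_asModule_iff] at h ⊢
  intro p hp
  have hpH := invtSubmodule_le_invtSubmodule_comp ρ H.subtype hp
  obtain ⟨f, hf, hcomm⟩ := (exists_isCompl_iff_exists_isProj_commute _ hpH).1 (h p hpH)
  refine (exists_isCompl_iff_exists_isProj_commute ρ hp).2
    ⟨_, isProj_inv_index_smul_relNorm_linHom ρ H hH hp hf, fun g ↦ Commute.smul_left ?_ _⟩
  rw [← linHom_apply_eq_self_iff_commute]
  exact apply_relNorm
    (fun x hx ↦ (linHom_apply_eq_self_iff_commute ρ _ _).2 (hcomm ⟨x, hx⟩)) g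

end Averaging

section Conjugation

variable {k G V : Type*} [CommSemiring k] [Group G] [AddCommMonoid V] [Module k V]
  (ρ : Representation k G V)

theorem map_mem_invtSubmodule_comp_subtype_of_normal (N : Subgroup G) [N.Normal] (g : G)
    {p : Submodule k V} (hp : p ∈ invtSubmodule (ρ.comp N.subtype)) :
    p.map (ρ g) ∈ invtSubmodule (ρ.comp N.subtype) := by
  rw [mem_invtSubmodule_iff_forall_apply_mem] at hp ⊢
  rintro n _ ⟨y, hy, rfl⟩
  have hconj : g⁻¹ * n * g ∈ N := by simpa using ‹N.Normal›.conj_mem _ n.2 g⁻¹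
  refine ⟨ρ (g⁻¹ * n * g) y, hp ⟨_, hconj⟩ y hy, ?_⟩
  simp [← Module.End.mul_apply, ← map_mul, mul_assoc]

theorem map_inv_map (g : G) (p : Submodule k V) : (p.map (ρ g)).map (ρ g⁻¹) = p := by
  rw [← Submodule.map_comp, ← Module.End.mul_eq_comp, ← map_mul, inv_mul_cancel, map_one,
    Module.End.one_eq_id, Submodule.map_id]

noncomputable def conjInvtSubmodule (N : Subgroup G) [N.Normal] (g : G) :
    invtSubmodule (ρ.comp N.subtype) ≃o invtSubmodule (ρ.comp N.subtype) where
  toFun p := ⟨p.1.map (ρ g), map_mem_invtSubmodule_comp_subtype_of_normal ρ N g p.2⟩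
  invFun p := ⟨p.1.map (ρ g⁻¹), map_mem_invtSubmodule_comp_subtype_of_normal ρ N g⁻¹ p.2⟩
  left_inv p := Subtype.ext (map_inv_map ρ g p)
  right_inv p := Subtype.ext (by simpa using map_inv_map ρ g⁻¹ p)
  map_rel_iff' := Submodule.map_le_map_iff_of_injective (ρ.apply_bijective g).1 _ _

theorem invtSubmodule_comp_subtype_subgroupOf {N H : Subgroup G} (hNH : N ≤ H) :
    invtSubmodule ((ρ.comp H.subtype).comp (N.subgroupOf H).subtype) =
      invtSubmodule (ρ.comp N.subtype) := by
  refine SetLike.ext fun p ↦ ?_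
  simp only [mem_invtSubmodule_iff_forall_apply_mem]
  exact ⟨fun h n ↦ h ⟨⟨n, hNH n.2⟩, n.2⟩, fun h n ↦ h ⟨n.1.1, n.2⟩⟩

end Conjugation

section Clifford

variable {k G V : Type*} [Field k] [Group G] [AddCommGroup V] [Module k V]
  (ρ : Representation k G V) (N : Subgroup G) [N.Normal]

theorem isSemisimpleModule_comp_subtype_of_normal [FiniteDimensional k V]
    (h : IsSemisimpleModule k[G] ρ.asModule) :
    IsSemisimpleModule k[N] (asModule (ρ.comp N.subtype)) := by
  let e := mapSubmodule (ρ.comp N.subtype)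
  have : IsArtinian k[N] (asModule (ρ.comp N.subtype)) := isArtinian_of_tower k inferInstance
  set S := sSup {P : Submodule k[N] (asModule (ρ.comp N.subtype)) | IsAtom P}
  have hS (g : G) : conjInvtSubmodule ρ N g (e.symm S) = e.symm S :=
    e.eq_symm_apply.2
      (OrderIso.map_sSup_setOf_isAtom (e.symm.trans ((conjInvtSubmodule ρ N g).trans e)))
  have hSG : (e.symm S : Submodule k V) ∈ ρ.invtSubmodule :=
    (mem_invtSubmodule_iff_forall_apply_mem ρ).2 fun g x hx ↦ by
      rw [← hS g]
      exact Submodule.mem_map_of_mem hx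
  obtain ⟨C, hC, hSC⟩ := (isSemisimpleModule_asModule_iff ρ).1 h _ hSG
  have hCN := invtSubmodule_le_invtSubmodule_comp ρ N.subtype hC
  have hSC' : IsCompl S (e ⟨C, hCN⟩) := by
    have := e.isCompl ((invtSubmodule.isCompl_mk_iff _ (e.symm S).2 hCN).2 hSC)
    rwa [e.apply_symm_apply] at this
  refine .of_sSup_simples_eq_top ?_
  simp_rw [isSimpleModule_iff_isAtom]
  exact sSup_setOf_isAtom_eq_top_of_isCompl hSC'

theorem isSemisimpleModule_comp_subtype_of_finiteIndex [CharZero k] [FiniteDimensional k V]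
    (H : Subgroup G) [H.FiniteIndex] (h : IsSemisimpleModule k[G] ρ.asModule) :
    IsSemisimpleModule k[H] (asModule (ρ.comp H.subtype)) := by
  have hN := isSemisimpleModule_comp_subtype_of_normal ρ H.normalCore h
  refine isSemisimpleModule_of_isSemisimpleModule_comp_subtype (ρ.comp H.subtype)
    (H.normalCore.subgroupOf H) (Nat.cast_ne_zero.2 Subgroup.FiniteIndex.index_ne_zero) ?_
  rw [isSemisimpleModule_asModule_iff] at hN ⊢
  rwa [invtSubmodule_comp_subtype_subgroupOf ρ H.normalCore_le]

end Clifford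

end Representation

theorem finite_index_restriction_semisimple_iff
    {G : Type*} [Group G] (H : Subgroup G) [H.FiniteIndex]
    (V : Type*) [AddCommGroup V] [Module ℂ V] [FiniteDimensional ℂ V]
    (ρ : Representation ℂ G V) :
    IsSemisimpleModule (MonoidAlgebra ℂ H)
      (Representation.asModule (ρ.comp H.subtype : Representation ℂ H V)) ↔
    IsSemisimpleModule (MonoidAlgebra ℂ G) ρ.asModule :=
  ⟨ρ.isSemisimpleModule_of_isSemisimpleModule_comp_subtype H
      (Nat.cast_ne_zero.2 Subgroup.FiniteIndex.index_ne_zero),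
    ρ.isSemisimpleModule_comp_subtype_of_finiteIndex H⟩
end

section
/- Let Γ be a finitely generated group containing a finite-index subgroup Γ' such that every representation Γ' → GL(r, ℂ) is rigid. Then every representation Γ → GL(r, ℂ) is rigid. -/
/-- The representation of `G` on `ℂⁿ` associated to a homomorphism `G →* GL(n, ℂ)`. -/
noncomputable def matRep {G : Type*} [Group G] {n : ℕ} (ρ : G →* GL (Fin n) ℂ) :
    Representation ℂ G (Fin n → ℂ) where
  toFun g := Matrix.toLin' (ρ g : Matrix (Fin n) (Fin n) ℂ)
  map_one' := by simp; rfl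
  map_mul' g₁ g₂ := by
    simp [map_mul, Matrix.toLin'_mul, Module.End.mul_eq_comp]

/-- A representation `G →* GL(n, ℂ)` is semisimple if the associated
`ℂ[G]`-module is semisimple. -/
def IsSemisimpleRep {G : Type*} [Group G] {n : ℕ} (ρ : G →* GL (Fin n) ℂ) : Prop :=
  IsSemisimpleModule (MonoidAlgebra ℂ G) (Representation.asModule (matRep ρ))

/-- Two representations into `GL(n, ℂ)` are isomorphic iff they are conjugate by an
element of `GL(n, ℂ)`. -/
def RepIso {G : Type*} [Group G] {n : ℕ} (ρ₁ ρ₂ : G →* GL (Fin n) ℂ) : Prop :=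
  ∃ M : GL (Fin n) ℂ, ∀ g : G, ρ₂ g = M * ρ₁ g * M⁻¹

/-- `Rigid G r` : every representation `G → GL(r, ℂ)` of the finitely generated
group `G` is rigid; equivalently (and this is how we phrase it), `G` has only
finitely many conjugacy classes of semisimple representations into `GL(r, ℂ)`. -/
def Rigid (G : Type*) [Group G] (r : ℕ) : Prop :=
  ∃ l : List (G →* GL (Fin r) ℂ),
    ∀ ρ : G →* GL (Fin r) ℂ, IsSemisimpleRep ρ → ∃ ρ' ∈ l, RepIso ρ ρ'

/-!
Let `ρ` be a semisimple representation of `Γ`. Its restriction to `Γ'` is again semisimple: by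
Clifford's argument the restriction to the normal core `N` of `Γ'` is semisimple (the sum of all
simple `N`-subrepresentations is `Γ`-stable, so its `Γ`-complement contains no simple
`N`-subrepresentation and vanishes), and averaging an `N`-equivariant projection over `Γ' ⧸ N`
makes it `Γ'`-equivariant. By rigidity of `Γ'`, the restriction is conjugate to one of finitely
many `σ`, and Frobenius reciprocity embeds `ρ` into the coinduced representation of `σ`, which is
finite-dimensional since `Γ'` has finite index. Finally, a module of finite length has only
finitely many isomorphism classes of semisimple submodules.
-/

open Representation
open scoped MonoidAlgebra

theorem complementedLattice_of_forall_invariant_exists_isCompl {α ι : Type*} [CompleteLattice α]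
    [IsModularLattice α] [IsCompactlyGenerated α] [IsAtomic α] (f : ι → α ≃o α)
    (h : ∀ a, (∀ i, f i a ≤ a) → ∃ b, IsCompl a b) : ComplementedLattice α := by
  apply complementedLattice_of_sSup_atoms_eq_top
  set T := sSup {a : α | IsAtom a}
  have hT : ∀ i, f i T ≤ T := fun i => by
    rw [OrderIso.map_sSup]
    exact iSup₂_le fun a ha => le_sSup (((f i).isAtom_iff a).mpr ha)
  obtain ⟨b, hb⟩ := h T hT
  obtain rfl | ⟨c, hc, hcb⟩ := eq_bot_or_exists_atom_le b
  · simpa using hb.sup_eq_top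
  · exact (hc.1 (le_bot_iff.mp (hb.disjoint (le_sSup hc) hcb))).elim

namespace Subrepresentation

section Monoid

variable {k G V : Type*} [Semiring k] [Monoid G] [AddCommMonoid V] [Module k V]
  {ρ : Representation k G V}

theorem isCompl_iff_isCompl_toSubmodule {S T : Subrepresentation ρ} :
    IsCompl S T ↔ IsCompl S.toSubmodule T.toSubmodule := by
  simp only [isCompl_iff, disjoint_iff, codisjoint_iff, ← toSubmodule_inf, ← toSubmodule_sup]
  exact and_congr toSubmodule_injective.eq_iff.symm toSubmodule_injective.eq_iff.symm

def restrict {K : Type*} [Monoid K] (φ : K →* G) (S : Subrepresentation ρ) :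
    Subrepresentation (ρ.comp φ) :=
  ⟨S.toSubmodule, fun x _ hv => S.apply_mem_toSubmodule (φ x) hv⟩

theorem isCompl_restrict {S T : Subrepresentation ρ} (h : IsCompl S T) {K : Type*} [Monoid K]
    (φ : K →* G) : IsCompl (S.restrict φ) (T.restrict φ) :=
  isCompl_iff_isCompl_toSubmodule.mpr ((isCompl_iff_isCompl_toSubmodule (S := S) (T := T)).mp h)

end Monoid

section Ring

variable {k G V : Type*} [Ring k] [Monoid G] [AddCommGroup V] [Module k V]
  {ρ : Representation k G V}

theorem commute_projection {S T : Subrepresentation ρ}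
    (h : IsCompl S.toSubmodule T.toSubmodule) (g : G) :
    Commute (ρ g) (S.toSubmodule.projection T.toSubmodule h) := by
  refine ((LinearMap.IsIdempotentElem.commute_iff
    (Submodule.isIdempotentElem_projection h)).mpr ⟨?_, ?_⟩).symm
  · rw [Submodule.range_projection, Module.End.mem_invtSubmodule_iff_forall_mem_of_mem]
    exact fun v hv => S.apply_mem_toSubmodule g hv
  · rw [Submodule.ker_projection, Module.End.mem_invtSubmodule_iff_forall_mem_of_mem]
    exact fun v hv => T.apply_mem_toSubmodule g hv

theorem exists_isCompl_of_commute (U : Subrepresentation ρ) {P : Module.End k V}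
    (hP : ∀ g, Commute (ρ g) P) (hP_mem : ∀ v, P v ∈ U.toSubmodule)
    (hP_id : ∀ u ∈ U.toSubmodule, P u = u) : ∃ W, IsCompl U W := by
  let P' : V →ₗ[k] U.toSubmodule := P.codRestrict _ hP_mem
  have hP' : IsCompl U.toSubmodule (LinearMap.ker P') :=
    LinearMap.isCompl_of_proj fun u => Subtype.ext (hP_id u u.2)
  refine ⟨⟨LinearMap.ker P', fun g v hv => ?_⟩, isCompl_iff_isCompl_toSubmodule.mpr hP'⟩
  have hv : P v = 0 := congrArg Subtype.val hv
  exact Subtype.ext (show P (ρ g v) = 0 by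
    rw [← Module.End.mul_apply, ← (hP g).eq, Module.End.mul_apply, hv, map_zero])

end Ring

variable {k G V : Type*} [Semiring k] [Group G] [AddCommMonoid V] [Module k V]
  {ρ : Representation k G V} (N : Subgroup G) [hN : N.Normal]

def translate (g : G) (S : Subrepresentation (ρ.comp N.subtype)) :
    Subrepresentation (ρ.comp N.subtype) where
  toSubmodule := S.toSubmodule.map (ρ g)
  apply_mem_toSubmodule n := by
    rintro _ ⟨v, hv, rfl⟩
    have hn : g⁻¹ * n * g ∈ N := by simpa using hN.conj_mem n n.2 g⁻¹
    refine ⟨ρ (g⁻¹ * n * g) v, S.apply_mem_toSubmodule ⟨_, hn⟩ hv, ?_⟩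
    simp [← Module.End.mul_apply, ← map_mul, mul_assoc]

theorem translate_translate (g h : G) (S : Subrepresentation (ρ.comp N.subtype)) :
    translate N g (translate N h S) = translate N (g * h) S := by
  ext1
  simp only [translate, map_mul, Module.End.mul_eq_comp, Submodule.map_comp]

theorem translate_one (S : Subrepresentation (ρ.comp N.subtype)) : translate N 1 S = S := by
  ext1
  simp only [translate, map_one]; exact Submodule.map_id _

theorem translate_mono (g : G) {S T : Subrepresentation (ρ.comp N.subtype)} (h : S ≤ T) :
    translate N g S ≤ translate N g T :=
  Submodule.map_mono (p := S.toSubmodule) h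

def translateOrderIso (g : G) :
    Subrepresentation (ρ.comp N.subtype) ≃o Subrepresentation (ρ.comp N.subtype) where
  toFun := translate N g
  invFun := translate N g⁻¹
  left_inv S := by simp [translate_translate, translate_one]
  right_inv S := by simp [translate_translate, translate_one]
  map_rel_iff' {S T} := ⟨fun h => by
    simpa [translate_translate, translate_one] using translate_mono N g⁻¹ h, translate_mono N g⟩

end Subrepresentation

theorem commute_sum_conj_out {A G : Type*} [Semiring A] [Group G] (ρ : G →* A) (R : Subgroup G)
    [Fintype (G ⧸ R)] {f : A} (hf : ∀ r ∈ R, Commute (ρ r) f) (g : G) :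
    Commute (ρ g) (∑ q : G ⧸ R, ρ q.out * f * ρ q.out⁻¹) := by
  have hρ (a : G) : ρ a * ρ a⁻¹ = 1 := by rw [← map_mul, mul_inv_cancel, map_one]
  have hconj (a b : G) (hab : (a : G ⧸ R) = b) : ρ a * f * ρ a⁻¹ = ρ b * f * ρ b⁻¹ := by
    obtain ⟨r, hr, rfl⟩ : ∃ r ∈ R, b = a * r := ⟨a⁻¹ * b, QuotientGroup.eq.mp hab, by group⟩
    calc ρ a * f * ρ a⁻¹ = ρ a * f * (ρ r * ρ r⁻¹) * ρ a⁻¹ := by rw [hρ, mul_one]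
      _ = ρ (a * r) * f * ρ (a * r)⁻¹ := by
        simp only [mul_inv_rev, map_mul, mul_assoc]
        rw [← mul_assoc (ρ r) f, (hf r hr).eq, mul_assoc]
  have hshift (q : G ⧸ R) : ρ g * (ρ q.out * f * ρ q.out⁻¹) =
      ρ (g • q).out * f * ρ (g • q).out⁻¹ * ρ g := by
    have hq : ((g * q.out : G) : G ⧸ R) = (g • q).out := by
      rw [← smul_eq_mul, ← MulAction.Quotient.smul_mk, QuotientGroup.out_eq', QuotientGroup.out_eq']
    rw [← hconj _ _ hq]
    simp only [mul_inv_rev, map_mul, mul_assoc]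
    rw [← map_mul ρ g⁻¹, inv_mul_cancel, map_one, mul_one]
  rw [Commute, SemiconjBy, Finset.mul_sum, Finset.sum_mul]
  simp_rw [hshift]
  exact Fintype.sum_equiv (MulAction.toPerm g) _ _ fun _ => rfl

namespace Representation

open Subrepresentation

variable {k G V : Type*} [Field k] [Group G] [AddCommGroup V] [Module k V]
  {ρ : Representation k G V}

theorem isSemisimpleRepresentation_comp_subtype_of_normal [FiniteDimensional k V]
    (N : Subgroup G) [N.Normal] (h : IsSemisimpleRepresentation ρ) :
    IsSemisimpleRepresentation (ρ.comp N.subtype) := by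
  let e := subrepresentationSubmoduleOrderIso (ρ := ρ.comp N.subtype)
  have : IsArtinian k[N] (asModule (ρ.comp N.subtype)) := isArtinian_of_tower k inferInstance
  rw [IsSemisimpleRepresentation, e.complementedLattice_iff]
  refine complementedLattice_of_forall_invariant_exists_isCompl
    (fun g => e.symm.trans ((translateOrderIso N g).trans e)) fun a ha => ?_
  have hS : ∀ (g : G), ∀ v ∈ (e.symm a).toSubmodule, ρ g v ∈ (e.symm a).toSubmodule :=
    fun g v hv => (e.le_symm_apply.mpr (ha g) : translate N g (e.symm a) ≤ _) ⟨v, hv, rfl⟩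
  obtain ⟨Q, hQ⟩ := h.exists_isCompl ⟨_, hS⟩
  refine ⟨e (Q.restrict N.subtype), ?_⟩
  rw [← e.apply_symm_apply a, ← e.isCompl_iff]
  exact isCompl_restrict hQ N.subtype

theorem isSemisimpleRepresentation_of_comp {K : Type*} [Group K] (φ : K →* G)
    (hφ : (φ.range.index : k) ≠ 0) (h : IsSemisimpleRepresentation (ρ.comp φ)) :
    IsSemisimpleRepresentation ρ := by
  have : φ.range.FiniteIndex := ⟨fun h0 => hφ (by simp [h0])⟩
  have := Fintype.ofFinite (G ⧸ φ.range)
  refine ⟨fun U => ?_⟩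
  obtain ⟨W, hUW⟩ := h.exists_isCompl (U.restrict φ)
  have hUW' : IsCompl U.toSubmodule W.toSubmodule := isCompl_iff_isCompl_toSubmodule.mp hUW
  set π := U.toSubmodule.projection W.toSubmodule hUW'
  have hπ : ∀ r ∈ φ.range, Commute (ρ r) π := by
    rintro _ ⟨x, rfl⟩
    exact commute_projection (S := U.restrict φ) (T := W) hUW' x
  set P := (φ.range.index : k)⁻¹ • ∑ q : G ⧸ φ.range, ρ q.out * π * ρ q.out⁻¹
  refine U.exists_isCompl_of_commute (P := P)
    (fun g => (commute_sum_conj_out ρ φ.range hπ g).smul_right _) (fun v => ?_) (fun u hu => ?_)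
  · simp only [P, LinearMap.smul_apply, LinearMap.sum_apply, Module.End.mul_apply]
    refine U.toSubmodule.smul_mem _ (Submodule.sum_mem _ fun q _ => U.apply_mem_toSubmodule _ ?_)
    exact Submodule.projection_apply_mem hUW' _
  · have hterm (q : G ⧸ φ.range) : (ρ q.out * π * ρ q.out⁻¹) u = u := by
      rw [Module.End.mul_apply, Module.End.mul_apply,
        Submodule.projection_apply_of_mem_left hUW' (U.apply_mem_toSubmodule _ hu),
        ← Module.End.mul_apply, ← map_mul, mul_inv_cancel, map_one, Module.End.one_apply]
    simp only [P, LinearMap.smul_apply, LinearMap.sum_apply, hterm, Finset.sum_const,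
      Finset.card_univ, ← Nat.cast_smul_eq_nsmul k, smul_smul, Subgroup.index_eq_card,
      Nat.card_eq_fintype_card]
    rw [inv_mul_cancel₀ (by simpa [Subgroup.index_eq_card, Nat.card_eq_fintype_card] using hφ),
      one_smul]

theorem isSemisimpleRepresentation_comp_subtype [CharZero k] [FiniteDimensional k V]
    (H : Subgroup G) [H.FiniteIndex] (h : IsSemisimpleRepresentation ρ) :
    IsSemisimpleRepresentation (ρ.comp H.subtype) := by
  refine isSemisimpleRepresentation_of_comp (Subgroup.inclusion H.normalCore_le) ?_
    (isSemisimpleRepresentation_comp_subtype_of_normal H.normalCore h)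
  have : (Subgroup.inclusion H.normalCore_le).range = H.normalCore.subgroupOf H := by
    ext x
    simp [Subgroup.mem_subgroupOf]
  rw [this]
  exact Nat.cast_ne_zero.mpr Subgroup.FiniteIndex.index_ne_zero

end Representation

namespace Submodule

variable {R M : Type*} [Ring R] [AddCommGroup M] [Module R M]

theorem nonempty_linearEquiv_prod_quotient [IsSemisimpleModule R M] (p : Submodule R M) :
    Nonempty (M ≃ₗ[R] p × (M ⧸ p)) :=
  have ⟨q, h⟩ : ∃ q, IsCompl p q := ComplementedLattice.exists_isCompl p
  ⟨(prodEquivOfIsCompl p q h).symm.trans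
    ((LinearEquiv.refl R p).prodCongr (quotientEquivOfIsCompl p q h).symm)⟩

theorem nonempty_linearEquiv_inf_prod_sup_quotient (p m : Submodule R M)
    [IsSemisimpleModule R p] :
    Nonempty (p ≃ₗ[R] ↥(p ⊓ m) × (↥(p ⊔ m) ⧸ m.comap (p ⊔ m).subtype)) :=
  have ⟨e⟩ := nonempty_linearEquiv_prod_quotient ((p ⊓ m).comap p.subtype)
  ⟨e.trans ((comapSubtypeEquivOfLe inf_le_left).prodCongr
    (quotEquivOfEq _ _ (by rw [comap_inf, comap_subtype_self, top_inf_eq]) ≪≫ₗ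
      LinearMap.quotientInfEquivSupQuotient p m))⟩

def FiniteIsoClasses (S : Set (Submodule R M)) : Prop :=
  ∃ F : Set (Submodule R M), F.Finite ∧ ∀ p ∈ S, ∃ q ∈ F, Nonempty (p ≃ₗ[R] q)

namespace FiniteIsoClasses

variable {S T : Set (Submodule R M)}

theorem of_finite (hS : S.Finite) : FiniteIsoClasses S :=
  ⟨S, hS, fun p hp => ⟨p, hp, ⟨.refl R p⟩⟩⟩

theorem subset (hT : FiniteIsoClasses T) (hST : S ⊆ T) : FiniteIsoClasses S :=
  have ⟨F, hF, hTF⟩ := hT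
  ⟨F, hF, fun p hp => hTF p (hST hp)⟩

theorem union (hS : FiniteIsoClasses S) (hT : FiniteIsoClasses T) : FiniteIsoClasses (S ∪ T) :=
  have ⟨F, hF, hSF⟩ := hS
  have ⟨F', hF', hTF'⟩ := hT
  ⟨F ∪ F', hF.union hF', fun p hp => hp.elim
    (fun hp => have ⟨q, hq, e⟩ := hSF p hp; ⟨q, .inl hq, e⟩)
    (fun hp => have ⟨q, hq, e⟩ := hTF' p hp; ⟨q, .inr hq, e⟩)⟩

theorem of_mapsTo {f : Submodule R M → Submodule R M} (hf : Set.MapsTo f S T)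
    (hiso : ∀ p ∈ S, ∀ p' ∈ S, Nonempty (f p ≃ₗ[R] f p') → Nonempty (p ≃ₗ[R] p'))
    (hT : FiniteIsoClasses T) : FiniteIsoClasses S := by
  classical
  obtain ⟨F, hF, hTF⟩ := hT
  let rep (q : Submodule R M) : Submodule R M :=
    if h : ∃ p ∈ S, Nonempty (f p ≃ₗ[R] q) then h.choose else q
  refine ⟨rep '' F, hF.image rep, fun p hp => ?_⟩
  obtain ⟨q, hq, ⟨e⟩⟩ := hTF (f p) (hf hp)
  have h : ∃ p ∈ S, Nonempty (f p ≃ₗ[R] q) := ⟨p, hp, ⟨e⟩⟩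
  obtain ⟨hrep, ⟨e'⟩⟩ := h.choose_spec
  refine ⟨rep q, Set.mem_image_of_mem rep hq, ?_⟩
  rw [show rep q = h.choose from dif_pos h]
  exact hiso p hp _ hrep ⟨e.trans e'.symm⟩

end FiniteIsoClasses

theorem finiteIsoClasses_isSemisimpleModule [IsArtinian R M] [IsNoetherian R M] :
    FiniteIsoClasses {p : Submodule R M | IsSemisimpleModule R p} := by
  suffices h : ∀ d : Submodule R M, FiniteIsoClasses {p | p ≤ d ∧ IsSemisimpleModule R p} from
    (h ⊤).subset fun p hp => ⟨le_top, hp⟩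
  intro d
  induction d using WellFoundedLT.induction with
  | ind d ih =>
  obtain rfl | hd := eq_or_ne d ⊥
  · exact (FiniteIsoClasses.of_finite (Set.finite_singleton ⊥)).subset
      fun p hp => le_bot_iff.mp hp.1
  -- `m` is maximal in `d`; a semisimple `p ≤ d` not below `m` is `(p ⊓ m) × d / m` up to iso
  obtain ⟨m, -, hmd⟩ := exists_le_covBy_of_lt (bot_lt_iff_ne_bot.mpr hd)
  refine ((ih m hmd.lt).union (FiniteIsoClasses.of_mapsTo (f := (· ⊓ m))
    (S := {p | p ≤ d ∧ ¬ p ≤ m ∧ IsSemisimpleModule R p}) ?_ ?_ (ih m hmd.lt))).subset ?_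
  · rintro p ⟨-, -, hp⟩
    exact ⟨inf_le_right, IsSemisimpleModule.of_injective (inclusion inf_le_left)
      (inclusion_injective _)⟩
  · rintro p ⟨hpd, hpm, hp⟩ p' ⟨hp'd, hp'm, hp'⟩ ⟨e⟩
    have hsup {x} (hxd : x ≤ d) (hxm : ¬ x ≤ m) : x ⊔ m = d :=
      (hmd.eq_or_eq le_sup_right (sup_le hxd hmd.le)).resolve_left fun h => hxm (h ▸ le_sup_left)
    obtain ⟨e₁⟩ := nonempty_linearEquiv_inf_prod_sup_quotient p m
    obtain ⟨e₂⟩ := nonempty_linearEquiv_inf_prod_sup_quotient p' m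
    rw [hsup hpd hpm] at e₁
    rw [hsup hp'd hp'm] at e₂
    exact ⟨e₁.trans ((e.prodCongr (.refl R _)).trans e₂.symm)⟩
  · rintro p ⟨hpd, hp⟩
    by_cases hpm : p ≤ m
    · exact .inl ⟨hpm, hp⟩
    · exact .inr ⟨hpd, hpm, hp⟩

end Submodule

namespace Representation

section coind

variable {k G H V A : Type*} [CommSemiring k] [Monoid G] [Monoid H] [AddCommMonoid V]
  [Module k V] [AddCommMonoid A] [Module k A] (φ : H →* G) {ρ : Representation k G V}
  {σ : Representation k H A}

/-- Frobenius reciprocity, in the direction from restriction to coinduction. -/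
def coindLift (f : IntertwiningMap (ρ.comp φ) σ) : ρ.IntertwiningMap (coind φ σ) where
  toLinearMap := (LinearMap.pi fun x => f.toLinearMap ∘ₗ ρ x).codRestrict (coindV φ σ)
    fun v h x => by simpa using IntertwiningMap.isIntertwining (ρ.comp φ) σ f h (ρ x v)
  isIntertwining' g := LinearMap.ext fun v => Subtype.ext <| funext fun x => by
    show f (ρ x (ρ g v)) = f (ρ (x * g) v)
    rw [map_mul, Module.End.mul_apply]

theorem coindLift_injective {f : IntertwiningMap (ρ.comp φ) σ} (hf : Function.Injective f) :
    Function.Injective (coindLift φ f) := fun v w hvw => hf <| by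
  have h1 : f (ρ 1 v) = f (ρ 1 w) := congrFun (congrArg Subtype.val hvw) 1
  simpa using h1

end coind

instance {k G A : Type*} [CommRing k] [IsNoetherianRing k] [Group G] [AddCommGroup A] [Module k A]
    [Module.Finite k A] (H : Subgroup G) [H.FiniteIndex] (σ : Representation k H A) :
    Module.Finite k (coindV H.subtype σ) := by
  have : Finite (Quotient (QuotientGroup.rightRel H)) :=
    .of_equiv _ (QuotientGroup.quotientRightRelEquivQuotientLeftRel H).symm
  refine Module.Finite.of_injective
    (LinearMap.pi fun q : Quotient (QuotientGroup.rightRel H) => LinearMap.proj q.out ∘ₗ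
      (coindV H.subtype σ).subtype) fun F F' hFF' => Subtype.ext (funext fun x => ?_)
  set q := Quotient.mk (QuotientGroup.rightRel H) x
  have hx : x * q.out⁻¹ ∈ H := QuotientGroup.rightRel_apply.mp (Quotient.mk_out x)
  have hF (F : coindV H.subtype σ) : F.1 x = σ ⟨_, hx⟩ (F.1 q.out) := by
    simpa using F.2 ⟨_, hx⟩ q.out
  rw [hF F, hF F', show F.1 _ = F'.1 _ from congrFun hFF' _]

end Representation

noncomputable def Representation.Equiv.ofAsModule {k G V W : Type*} [CommSemiring k] [Monoid G]
    [AddCommMonoid V] [Module k V] [AddCommMonoid W] [Module k W] {ρ : Representation k G V}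
    {σ : Representation k G W} (e : ρ.asModule ≃ₗ[k[G]] σ.asModule) : ρ.Equiv σ :=
  .mk ((ρ.asModuleEquiv.symm.trans (e.restrictScalars k)).trans σ.asModuleEquiv) fun g => by
    ext v
    have := e.map_smul (MonoidAlgebra.single g (1 : k)) (ρ.asModuleEquiv.symm v)
    rw [Representation.single_smul, Representation.single_smul, one_smul, one_smul] at this
    exact this

theorem repIso_iff_nonempty_equiv {G : Type*} [Group G] {n : ℕ} {ρ₁ ρ₂ : G →* GL (Fin n) ℂ} :
    RepIso ρ₁ ρ₂ ↔ Nonempty ((matRep ρ₁).Equiv (matRep ρ₂)) := by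
  let Φ := Matrix.GeneralLinearGroup.toLin.trans
    (LinearMap.GeneralLinearGroup.generalLinearEquiv ℂ (Fin n → ℂ))
  have key (M : GL (Fin n) ℂ) : (∀ g, ρ₂ g = M * ρ₁ g * M⁻¹) ↔
      ∀ g, (Φ M).toLinearMap ∘ₗ matRep ρ₁ g = matRep ρ₂ g ∘ₗ (Φ M).toLinearMap := by
    refine forall_congr' fun g => ?_
    rw [eq_mul_inv_iff_mul_eq, ← Φ.injective.eq_iff, map_mul, map_mul,
      ← LinearEquiv.toLinearMap_inj, eq_comm]
    rfl
  constructor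
  · rintro ⟨M, hM⟩
    exact ⟨.mk (Φ M) ((key M).mp hM)⟩
  · rintro ⟨e⟩
    obtain ⟨M, hM⟩ := Φ.surjective e.toLinearEquiv
    exact ⟨M, (key M).mpr (hM ▸ e.isIntertwining')⟩

theorem Representation.exists_finite_isoClasses_of_injective {k G W : Type*} [Field k] [Monoid G]
    [AddCommGroup W] [Module k W] [FiniteDimensional k W] (σ : Representation k G W) :
    ∃ F : Set (Submodule k[G] σ.asModule), F.Finite ∧
      ∀ {V : Type*} [AddCommGroup V] [Module k V] (ρ : Representation k G V),
        IsSemisimpleRepresentation ρ → ∀ f : ρ.IntertwiningMap σ, Function.Injective f →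
          ∃ q ∈ F, Nonempty (ρ.asModule ≃ₗ[k[G]] q) := by
  have : IsArtinian k[G] σ.asModule := isArtinian_of_tower k inferInstance
  have : IsNoetherian k[G] σ.asModule := isNoetherian_of_tower k inferInstance
  obtain ⟨F, hF, hFS⟩ := Submodule.finiteIsoClasses_isSemisimpleModule (R := k[G]) (M := σ.asModule)
  refine ⟨F, hF, fun ρ hρ f hf => ?_⟩
  rw [isSemisimpleRepresentation_iff_isSemisimpleModule_asModule] at hρ
  let ι := IntertwiningMap.equivLinearMapAsModule ρ σ f
  obtain ⟨q, hq, ⟨e⟩⟩ := hFS (LinearMap.range ι) (IsSemisimpleModule.range ι)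
  exact ⟨q, hq, ⟨(LinearEquiv.ofInjective ι hf).trans e⟩⟩

theorem IsSemisimpleRep.comp_subtype {G : Type*} [Group G] {n : ℕ} {ρ : G →* GL (Fin n) ℂ}
    (hρ : IsSemisimpleRep ρ) (H : Subgroup G) [H.FiniteIndex] :
    IsSemisimpleRep (ρ.comp H.subtype) :=
  (Representation.isSemisimpleRepresentation_iff_isSemisimpleModule_asModule _).mp <|
    Representation.isSemisimpleRepresentation_comp_subtype H <|
      (Representation.isSemisimpleRepresentation_iff_isSemisimpleModule_asModule _).mpr hρ

theorem rigid_of_finite_classification {G α : Type*} [Group G] {r : ℕ} {s : Set α}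
    (hs : s.Finite) (c : (G →* GL (Fin r) ℂ) → α → Prop)
    (hc : ∀ ρ, IsSemisimpleRep ρ → ∃ a ∈ s, c ρ a)
    (hiso : ∀ ρ₁ ρ₂ a, c ρ₁ a → c ρ₂ a → RepIso ρ₁ ρ₂) : Rigid G r := by
  classical
  let rep (a : α) : G →* GL (Fin r) ℂ := if h : ∃ ρ, c ρ a then h.choose else 1
  refine ⟨(hs.image rep).toFinset.toList, fun ρ hρ => ?_⟩
  obtain ⟨a, ha, hρa⟩ := hc ρ hρ
  have h : ∃ ρ, c ρ a := ⟨ρ, hρa⟩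
  refine ⟨rep a, by simpa using Set.mem_image_of_mem rep ha, hiso _ _ a hρa ?_⟩
  rw [show rep a = h.choose from dif_pos h]
  exact h.choose_spec

theorem rigid_of_finite_index_rigid_general
    {Γ : Type*} [Group Γ] (Γ' : Subgroup Γ) [Γ'.FiniteIndex]
    (r : ℕ) (h : Rigid Γ' r) :
    Rigid Γ r := by
  obtain ⟨l, hl⟩ := h
  choose F hF_fin hF using fun σ : Γ' →* GL (Fin r) ℂ =>
    exists_finite_isoClasses_of_injective (coind Γ'.subtype (matRep σ))
  refine rigid_of_finite_classification
    (l.finite_toSet.biUnion fun σ _ => (hF_fin σ).image (Sigma.mk σ))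
    (fun ρ x => Nonempty ((matRep ρ).asModule ≃ₗ[ℂ[Γ]] x.2)) (fun ρ hρ => ?_) ?_
  -- `ρ` is labelled by some `σ ∈ l` conjugate to its restriction and a submodule of `Coind σ`
  -- isomorphic to `ρ`, chosen among finitely many
  · obtain ⟨σ, hσ, hρσ⟩ := hl _ (hρ.comp_subtype Γ')
    obtain ⟨e⟩ := repIso_iff_nonempty_equiv.mp hρσ
    obtain ⟨q, hq, hρq⟩ := hF σ (matRep ρ)
      ((isSemisimpleRepresentation_iff_isSemisimpleModule_asModule _).mpr hρ)
      (coindLift Γ'.subtype e.toIntertwiningMap) (coindLift_injective _ e.injective)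
    exact ⟨⟨σ, q⟩, Set.mem_biUnion hσ (Set.mem_image_of_mem _ hq), hρq⟩
  · rintro ρ₁ ρ₂ x ⟨e₁⟩ ⟨e₂⟩
    exact repIso_iff_nonempty_equiv.mpr ⟨.ofAsModule (e₁.trans e₂.symm)⟩

theorem rigid_of_finite_index_rigid
    {Γ : Type*} [Group Γ] [Group.FG Γ] (Γ' : Subgroup Γ) [Γ'.FiniteIndex]
    (r : ℕ) (h : Rigid Γ' r) :
    Rigid Γ r :=
  rigid_of_finite_index_rigid_general Γ' r h
end
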